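/- For momenta satisfying p + q₁ + q₂ = 0 with q₁² = q₂² = 0 (massless on-shell ghosts) and p² ≠ 0, the contraction of the graviton gauge-transformation tensor with the graviton–gauge-ghost vertex tensor vanishes: (1/p²)(p_μ δ^τ_ν + p_ν δ^τ_μ)((q₁·q₂)η^{μν} − q₁^μ q₂^ν − q₂^μ q₁^ν) = 0. -/
import Mathlib


open Finset BigOperators

noncomputable section

/-- Minkowski metric of signature (+,-,-,-); equal components for η_{μν} and η^{μν}. -/
def eta (μ ν : Fin 4) : ℝ := if μ = ν then (if μ = (0 : Fin 4) then 1 else -1) else 0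

/-- Kronecker delta. -/
def dlt (μ ν : Fin 4) : ℝ := if μ = ν then 1 else 0

/-- Lowered momentum p_μ := η_{μν} p^ν. -/
def lower (p : Fin 4 → ℝ) (μ : Fin 4) : ℝ := ∑ ν, eta μ ν * p ν

/-- Minkowski square p² := η_{μν} p^μ p^ν. -/
def msq (p : Fin 4 → ℝ) : ℝ := ∑ μ, p μ * lower p μ

/-- Minkowski inner product. -/
def dot (p q : Fin 4 → ℝ) : ℝ := ∑ μ, lower p μ * q μ

/-- Gluon longitudinal projector L^ν_μ := p^ν p_μ / p². -/
def L (p : Fin 4 → ℝ) (ν μ : Fin 4) : ℝ := (1 / msq p) * p ν * lower p μ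

/-- Gluon transversal projector T^ν_μ := δ^ν_μ − L^ν_μ. -/
def T (p : Fin 4 → ℝ) (ν μ : Fin 4) : ℝ := dlt ν μ - L p ν μ

/-- Gauge transformation tensor g_μ := p_μ / p². -/
def gT (p : Fin 4 → ℝ) (μ : Fin 4) : ℝ := (1 / msq p) * lower p μ

/-- Gauge fixing tensor l^ν := p^ν. -/
def lT (p : Fin 4 → ℝ) (ν : Fin 4) : ℝ := p ν

/-- Rescaled metric G_{μν} := η_{μν}/p². -/
def Glo (p : Fin 4 → ℝ) (μ ν : Fin 4) : ℝ := (1 / msq p) * eta μ ν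

/-- Inverse rescaled metric G^{μν} := p² η^{μν}. -/
def Ghi (p : Fin 4 → ℝ) (μ ν : Fin 4) : ℝ := msq p * eta μ ν

/-- Graviton longitudinal projector 𝕃^{ρσ}_{μν}. -/
def LL (p : Fin 4 → ℝ) (ρ σ μ ν : Fin 4) : ℝ :=
  (1 / (2 * msq p)) * (dlt ρ μ * p σ * lower p ν + dlt σ μ * p ρ * lower p ν
    + dlt ρ ν * p σ * lower p μ + dlt σ ν * p ρ * lower p μ
    - 2 * eta ρ σ * lower p μ * lower p ν)

/-- Graviton identity (symmetrizer) 𝕀^{ρσ}_{μν}. -/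
def II (ρ σ μ ν : Fin 4) : ℝ := (1 / 2) * (dlt ρ μ * dlt σ ν + dlt σ μ * dlt ρ ν)

/-- Graviton transversal projector 𝕋^{ρσ}_{μν} := 𝕀 − 𝕃. -/
def TT (p : Fin 4 → ℝ) (ρ σ μ ν : Fin 4) : ℝ := II ρ σ μ ν - LL p ρ σ μ ν

/-- DeWitt-type metric 𝔾_{μνρσ}. -/
def GGlo (p : Fin 4 → ℝ) (μ ν ρ σ : Fin 4) : ℝ :=
  (1 / msq p) * (eta μ ρ * eta ν σ + eta μ σ * eta ν ρ - eta μ ν * eta ρ σ)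

/-- Inverse DeWitt-type metric 𝔾^{μνρσ}. -/
def GGhi (p : Fin 4 → ℝ) (μ ν ρ σ : Fin 4) : ℝ :=
  (msq p / 4) * (eta μ ρ * eta ν σ + eta μ σ * eta ν ρ - eta μ ν * eta ρ σ)

/-- Graviton gauge transformation tensor 𝒢^κ_{μν}. -/
def GrG (p : Fin 4 → ℝ) (κ μ ν : Fin 4) : ℝ :=
  (1 / msq p) * (lower p μ * dlt ν κ + lower p ν * dlt μ κ)

/-- Graviton gauge fixing projection ℒ^{ρσ}_λ. -/
def GrL (p : Fin 4 → ℝ) (ρ σ lam : Fin 4) : ℝ :=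
  (1 / 2) * (p ρ * dlt σ lam + p σ * dlt ρ lam - lower p lam * eta ρ σ)

lemma eta_symm (μ ν : Fin 4) : eta μ ν = eta ν μ := by
  unfold eta; rcases eq_or_ne μ ν with h | h
  · subst h; rfl
  · simp [h, h.symm]

lemma sum_dlt_collapse (τ : Fin 4) (X : Fin 4 → ℝ) :
    ∑ ν, dlt ν τ * X ν = X τ := by
  unfold dlt
  simp [ite_mul]

lemma dot_self (v : Fin 4 → ℝ) : dot v v = msq v := by
  unfold dot msq; exact Finset.sum_congr rfl (fun μ _ => by ring)

lemma dot_symm (u v : Fin 4 → ℝ) : dot u v = dot v u := by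
  unfold dot lower
  simp only [Fin.sum_univ_four]
  simp (config := { decide := true }) [eta]
  ring

lemma sum_lower_eta (p : Fin 4 → ℝ) (τ : Fin 4) :
    ∑ μ, lower p μ * eta μ τ = p τ := by
  fin_cases τ <;>
  · simp only [lower, Fin.sum_univ_four]
    simp (config := { decide := true }) [eta, Fin.isValue]
    try ring

/-- on-shell contraction identity for the graviton–gauge-ghost vertex. -/
theorem stmt19 (p q1 q2 : Fin 4 → ℝ)
    (hmc : ∀ μ, p μ = -(q1 μ + q2 μ)) (hp : msq p ≠ 0)
    (h1 : msq q1 = 0) (h2 : msq q2 = 0) :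
    ∀ τ : Fin 4,
      (∑ μ, ∑ ν, GrG p τ μ ν *
        (dot q1 q2 * eta μ ν - q1 μ * q2 ν - q2 μ * q1 ν)) = 0 := by
  intro τ
  set V : Fin 4 → Fin 4 → ℝ :=
    fun μ ν => dot q1 q2 * eta μ ν - q1 μ * q2 ν - q2 μ * q1 ν with hV
  have hVsymm : ∀ μ ν, V μ ν = V ν μ := by
    intro μ ν; simp only [hV, eta_symm μ ν]; ring
  have hlow : ∀ μ, lower p μ = -(lower q1 μ + lower q2 μ) := by
    intro μ
    unfold lower
    rw [← Finset.sum_add_distrib, ← Finset.sum_neg_distrib]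
    exact Finset.sum_congr rfl (fun ν _ => by rw [hmc]; ring)
  have hdot : ∀ q : Fin 4 → ℝ, dot p q = -(dot q1 q + dot q2 q) := by
    intro q
    unfold dot
    rw [← Finset.sum_add_distrib, ← Finset.sum_neg_distrib]
    exact Finset.sum_congr rfl (fun μ _ => by rw [hlow]; ring)
  have key : (∑ μ, ∑ ν, GrG p τ μ ν * V μ ν)
      = (2 / msq p) * ∑ μ, lower p μ * V μ τ := by
    calc (∑ μ, ∑ ν, GrG p τ μ ν * V μ ν)
        = ∑ μ, (1 / msq p) * (lower p μ * (∑ ν, dlt ν τ * V μ ν)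
            + dlt μ τ * (∑ ν, lower p ν * V μ ν)) := by
          refine Finset.sum_congr rfl fun μ _ => ?_
          simp only [GrG, Fin.sum_univ_four]
          ring
      _ = ∑ μ, (1 / msq p) * (lower p μ * V μ τ
            + dlt μ τ * (∑ ν, lower p ν * V μ ν)) := by
          refine Finset.sum_congr rfl fun μ _ => ?_
          rw [sum_dlt_collapse]
      _ = (1 / msq p) * ((∑ μ, lower p μ * V μ τ)
            + ∑ μ, dlt μ τ * (∑ ν, lower p ν * V μ ν)) := by
          simp only [Fin.sum_univ_four]; ring
      _ = (1 / msq p) * ((∑ μ, lower p μ * V μ τ) + ∑ ν, lower p ν * V τ ν) := by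
          rw [sum_dlt_collapse τ (fun μ => ∑ ν, lower p ν * V μ ν)]
      _ = (2 / msq p) * ∑ μ, lower p μ * V μ τ := by
          have h : (∑ ν, lower p ν * V τ ν) = ∑ ν, lower p ν * V ν τ :=
            Finset.sum_congr rfl fun ν _ => by rw [hVsymm τ ν]
          rw [h]; ring
  rw [key]
  have expand : (∑ μ, lower p μ * V μ τ)
      = dot q1 q2 * (∑ μ, lower p μ * eta μ τ) - dot p q1 * q2 τ - dot p q2 * q1 τ := by
    simp only [hV, dot, Fin.sum_univ_four]
    ring
  rw [expand, sum_lower_eta, hdot q1, hdot q2, dot_self, dot_self, h1, h2, hmc τ,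
    dot_symm q2 q1]
  ring
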